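/- arXiv:1702.02460 — 2 statements merged into one kernel-verified Lean document; each statement's English description precedes it below -/
import Mathlib

section
/- Let G be a connected graph and D ⊆ V(G) a dominating set such that: every vertex is in D or adjacent to a vertex of D; and for any two vertices u,v ∈ D at graph distance 2 or 3 in G, the intermediate vertices of some shortest u-v path are added to a set H. Then the subgraph of G induced on D ∪ H is connected. -/
private lemma lift_walk {V : Type*} {G : SimpleGraph V} {S : Set V} :
    ∀ {u v : V} (p : G.Walk u v), (∀ w ∈ p.support, w ∈ S) →
      ∀ (hu : u ∈ S) (hv : v ∈ S), (G.induce S).Reachable ⟨u, hu⟩ ⟨v, hv⟩ := by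
  intro u v p
  induction p with
  | nil => intro _ hu hv; rfl
  | @cons a b c h q ih =>
    intro hsupp hu hv
    have hb : b ∈ S := by
      apply hsupp
      simp [SimpleGraph.Walk.support_cons]
    have hadj : (G.induce S).Adj ⟨a, hu⟩ ⟨b, hb⟩ := by
      simpa using h
    exact hadj.reachable.trans
      (ih (fun w hw => hsupp w (by simp [SimpleGraph.Walk.support_cons, hw])) hb hv)

private lemma two_step {V : Type*} {G : SimpleGraph V} {u v : V}
    (p : G.Walk u v) (h2 : 2 ≤ p.length) :
    ∃ (x : V) (q : G.Walk x v), G.dist u x ≤ 2 ∧ q.length = p.length - 2 := by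
  cases p with
  | nil => simp at h2
  | @cons _ b _ h1 p1 =>
    cases p1 with
    | nil => simp at h2
    | @cons _ c _ hbc p2 =>
      refine ⟨c, p2, ?_, by simp⟩
      have : G.dist u c ≤ (SimpleGraph.Walk.cons h1 (SimpleGraph.Walk.cons hbc SimpleGraph.Walk.nil)).length :=
        SimpleGraph.dist_le _
      simpa using this

/-- Let `G` be a connected graph, `D` a dominating set, and suppose that for
any two vertices of `D` at graph distance `2` or `3`, the internal vertices of
some shortest path between them belong to `H`. Then the subgraph of `G`
induced on `D ∪ H` is connected. -/
theorem stmt8 {V : Type*} (G : SimpleGraph V) (hG : G.Connected)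
    (D H : Set V) (hDne : D.Nonempty)
    (hdom : ∀ v : V, v ∈ D ∨ ∃ d ∈ D, G.Adj d v)
    (hhelp : ∀ u ∈ D, ∀ v ∈ D, (G.dist u v = 2 ∨ G.dist u v = 3) →
      ∃ p : G.Walk u v, p.length = G.dist u v ∧
        ∀ w ∈ p.support, w ≠ u → w ≠ v → w ∈ H) :
    (G.induce (D ∪ H)).Connected := by
  set S : Set V := D ∪ H with hS
  -- small-distance connectivity between D vertices
  have hsmall : ∀ u ∈ D, ∀ v ∈ D, G.dist u v ≤ 3 →
      ∀ (hu : u ∈ S) (hv : v ∈ S), (G.induce S).Reachable ⟨u, hu⟩ ⟨v, hv⟩ := by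
    intro u hu v hv hd huS hvS
    interval_cases h : (G.dist u v)
    · have : u = v := (hG.dist_eq_zero_iff).mp h
      subst this; rfl
    · have hadj : G.Adj u v := SimpleGraph.dist_eq_one_iff_adj.mp h
      exact SimpleGraph.Adj.reachable (by simpa using hadj)
    · obtain ⟨p, _, hpH⟩ := hhelp u hu v hv (Or.inl h)
      refine lift_walk p ?_ huS hvS
      intro w hw
      by_cases h1 : w = u
      · subst h1; exact huS
      by_cases h2 : w = v
      · subst h2; exact hvS
      · exact Or.inr (hpH w hw h1 h2)
    · obtain ⟨p, _, hpH⟩ := hhelp u hu v hv (Or.inr h)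
      refine lift_walk p ?_ huS hvS
      intro w hw
      by_cases h1 : w = u
      · subst h1; exact huS
      by_cases h2 : w = v
      · subst h2; exact hvS
      · exact Or.inr (hpH w hw h1 h2)
  -- D-vertices reachability, by induction on distance bound
  have hD : ∀ k : ℕ, ∀ u ∈ D, ∀ v ∈ D, G.dist u v ≤ k →
      ∀ (hu : u ∈ S) (hv : v ∈ S), (G.induce S).Reachable ⟨u, hu⟩ ⟨v, hv⟩ := by
    intro k
    induction k with
    | zero =>
      intro u hu v hv hd huS hvS
      have : u = v := (hG.dist_eq_zero_iff).mp (Nat.le_zero.mp hd)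
      subst this; rfl
    | succ k ih =>
      intro u hu v hv hd huS hvS
      by_cases hk : G.dist u v ≤ k
      · exact ih u hu v hv hk huS hvS
      have hdist : G.dist u v = k + 1 := le_antisymm hd (Nat.succ_le_of_lt (lt_of_not_ge hk))
      by_cases h3 : G.dist u v ≤ 3
      · exact hsmall u hu v hv h3 huS hvS
      -- dist ≥ 4
      obtain ⟨p, hp⟩ := hG.exists_walk_length_eq_dist u v
      have hlen : p.length = k + 1 := by rw [hp, hdist]
      obtain ⟨x, q, hux, hq⟩ := two_step p (by omega)
      have hxv : G.dist x v ≤ k - 1 := by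
        have := SimpleGraph.dist_le q
        omega
      obtain hxD | ⟨d, hdD, hdx⟩ := hdom x
      · -- x itself in D
        have h1 : (G.induce S).Reachable ⟨u, huS⟩ ⟨x, Or.inl hxD⟩ :=
          hsmall u hu x hxD (by omega) huS (Or.inl hxD)
        have h2 : (G.induce S).Reachable ⟨x, Or.inl hxD⟩ ⟨v, hvS⟩ :=
          ih x hxD v hv (by omega) (Or.inl hxD) hvS
        exact h1.trans h2
      · have hdS : d ∈ S := Or.inl hdD
        have hud : G.dist u d ≤ 3 := by
          have htri : G.dist u d ≤ G.dist u x + G.dist x d := hG.dist_triangle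
          have hxd : G.dist x d ≤ 1 := by
            rw [SimpleGraph.dist_comm]
            exact le_of_eq (SimpleGraph.dist_eq_one_iff_adj.mpr hdx)
          omega
        have hdv : G.dist d v ≤ k := by
          have htri : G.dist d v ≤ G.dist d x + G.dist x v := hG.dist_triangle
          have hdx1 : G.dist d x ≤ 1 := le_of_eq (SimpleGraph.dist_eq_one_iff_adj.mpr hdx)
          omega
        have h1 : (G.induce S).Reachable ⟨u, huS⟩ ⟨d, hdS⟩ :=
          hsmall u hu d hdD hud huS hdS
        have h2 : (G.induce S).Reachable ⟨d, hdS⟩ ⟨v, hvS⟩ :=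
          ih d hdD v hv hdv hdS hvS
        exact h1.trans h2
  rw [SimpleGraph.connected_iff]
  refine ⟨?_, ?_⟩
  · intro a b
    obtain ⟨av, haS⟩ := a
    obtain ⟨bv, hbS⟩ := b
    -- connect each to a D vertex
    have step : ∀ (w : V) (hw : w ∈ S), ∃ (d : V) (hd : d ∈ D),
        (G.induce S).Reachable ⟨w, hw⟩ ⟨d, Or.inl hd⟩ := by
      intro w hw
      obtain hwD | ⟨d, hdD, hdw⟩ := hdom w
      · exact ⟨w, hwD, by rfl⟩
      · exact ⟨d, hdD, (SimpleGraph.Adj.reachable (by simpa using hdw.symm : (G.induce S).Adj ⟨w, hw⟩ ⟨d, Or.inl hdD⟩))⟩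
    obtain ⟨da, hda, hra⟩ := step av haS
    obtain ⟨db, hdb, hrb⟩ := step bv hbS
    exact hra.trans ((hD (G.dist da db) da hda db hdb le_rfl _ _).trans hrb.symm)
  · obtain ⟨d, hd⟩ := hDne
    exact ⟨⟨d, Or.inl hd⟩⟩
end

section
/- Let G be a connected graph, D an independent dominating set of G, and construct the backbone graph B on D with u ~_B v iff dist_G(u,v) ≤ 3. Then for all u,v ∈ D, dist_B(u,v) ≤ dist_G(u,v), and hence the diameter of B is at most the diameter of G. -/
private lemma myLengthDrop {V : Type*} {G : SimpleGraph V} {u v : V}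
    (p : G.Walk u v) (n : ℕ) : (p.drop n).length = p.length - n := by
  induction p generalizing n with
  | nil => cases n <;> simp [SimpleGraph.Walk.drop]
  | cons h q ih =>
    cases n with
    | zero => simp [SimpleGraph.Walk.drop]
    | succ n => simp [SimpleGraph.Walk.drop, ih]

/-- Let `G` be a connected graph, `D` an independent dominating set, and `B`
the backbone graph on `D` with `u ~ v` iff `1 ≤ dist_G(u,v) ≤ 3`. Then
`dist_B(u,v) ≤ dist_G(u,v)` for all `u, v ∈ D`, and hence the diameter of `B`
is at most the diameter of `G`. -/
theorem stmt11 {V : Type*} (G : SimpleGraph V) (hG : G.Connected)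
    (D : Set V) (hne : D.Nonempty)
    (hdom : ∀ v : V, v ∈ D ∨ ∃ d ∈ D, G.Adj d v)
    (hind : ∀ u ∈ D, ∀ v ∈ D, ¬ G.Adj u v) :
    (∀ u v : D,
      (SimpleGraph.fromRel (fun a b : D => G.dist (a : V) (b : V) ≤ 3)).dist u v
        ≤ G.dist (u : V) (v : V)) ∧
    (SimpleGraph.fromRel (fun a b : D => G.dist (a : V) (b : V) ≤ 3)).diam
      ≤ G.diam := by
  set B := SimpleGraph.fromRel (fun a b : D => G.dist (a : V) (b : V) ≤ 3) with hB
  -- key walk construction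
  have key : ∀ n : ℕ, ∀ u v : D, G.dist (u : V) (v : V) ≤ n →
      ∃ p : B.Walk u v, p.length ≤ G.dist (u : V) (v : V) := by
    intro n
    induction n using Nat.strong_induction_on with
    | _ n ih =>
      intro u v hn
      by_cases huv : u = v
      · subst huv; exact ⟨SimpleGraph.Walk.nil, by simp⟩
      have huv' : (u : V) ≠ (v : V) := fun h => huv (Subtype.ext h)
      set m := G.dist (u : V) (v : V) with hm
      have hm1 : 1 ≤ m := hG.pos_dist_of_ne huv'
      have hm2 : m ≠ 1 := by
        intro h
        exact hind u u.2 v v.2 (SimpleGraph.dist_eq_one_iff_adj.mp (hm ▸ h))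
      by_cases hle3 : m ≤ 3
      · have hadj : B.Adj u v := ⟨huv, Or.inl hle3⟩
        exact ⟨SimpleGraph.Walk.cons hadj SimpleGraph.Walk.nil, by simp; omega⟩
      -- m ≥ 4
      push_neg at hle3
      obtain ⟨p, hp⟩ := (hG (u : V) (v : V)).exists_walk_length_eq_dist
      have hplen : p.length = m := hp
      have h01 : G.Adj (u : V) (p.getVert 1) := by
        have := p.adj_getVert_succ (i := 0) (by omega)
        simpa using this
      have h12 : G.Adj (p.getVert 1) (p.getVert 2) := p.adj_getVert_succ (i := 1) (by omega)
      have hux : G.dist (u : V) (p.getVert 2) ≤ 2 := by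
        have := G.dist_le (SimpleGraph.Walk.cons h01 (SimpleGraph.Walk.cons h12 SimpleGraph.Walk.nil))
        simpa using this
      have hxv : G.dist (p.getVert 2) (v : V) ≤ m - 2 := by
        have := G.dist_le (p.drop 2)
        rw [myLengthDrop] at this
        omega
      -- dominate p.getVert 2
      have hstep : ∃ d : D, (d : V) ≠ (u : V) ∧ G.dist (u : V) (d : V) ≤ 3 ∧
          G.dist (d : V) (v : V) ≤ m - 1 := by
        rcases hdom (p.getVert 2) with hxD | ⟨d, hdD, hadj⟩
        · refine ⟨⟨p.getVert 2, hxD⟩, ?_, ?_, ?_⟩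
          · intro h
            have h' : p.getVert 2 = (u : V) := h
            rw [h'] at hxv
            omega
          · show G.dist (u : V) (p.getVert 2) ≤ 3
            omega
          · show G.dist (p.getVert 2) (v : V) ≤ m - 1
            omega
        · refine ⟨⟨d, hdD⟩, ?_, ?_, ?_⟩
          · intro h
            have h' : d = (u : V) := h
            rw [h'] at hadj
            have h1 : G.dist (u : V) (p.getVert 2) = 1 :=
              SimpleGraph.dist_eq_one_iff_adj.mpr hadj
            have := hG.dist_triangle (u := (u : V)) (v := p.getVert 2) (w := (v : V))
            omega
          · show G.dist (u : V) d ≤ 3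
            have h1 : G.dist (p.getVert 2) d = 1 :=
              SimpleGraph.dist_eq_one_iff_adj.mpr hadj.symm
            have := hG.dist_triangle (u := (u : V)) (v := p.getVert 2) (w := d)
            omega
          · show G.dist d (v : V) ≤ m - 1
            have h1 : G.dist d (p.getVert 2) = 1 :=
              SimpleGraph.dist_eq_one_iff_adj.mpr hadj
            have := hG.dist_triangle (u := d) (v := p.getVert 2) (w := (v : V))
            omega
      obtain ⟨d, hdu, hud3, hdv⟩ := hstep
      have hadjB : B.Adj u d := ⟨fun h => hdu (congrArg Subtype.val h).symm, Or.inl hud3⟩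
      obtain ⟨q, hq⟩ := ih (m - 1) (by omega) d v hdv
      exact ⟨SimpleGraph.Walk.cons hadjB q, by
        simp only [SimpleGraph.Walk.length_cons]
        omega⟩
  have part1 : ∀ u v : D, B.dist u v ≤ G.dist (u : V) (v : V) := by
    intro u v
    obtain ⟨p, hp⟩ := key (G.dist (u : V) (v : V)) u v le_rfl
    exact (B.dist_le p).trans hp
  refine ⟨part1, ?_⟩
  -- reverse bound: G.dist ≤ 3 * walk length in B
  have rev : ∀ (a b : D) (q : B.Walk a b), G.dist (a : V) (b : V) ≤ 3 * q.length := by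
    intro a b q
    induction q with
    | nil => simp
    | @cons a c b h q ih =>
      have hac : G.dist (a : V) (c : V) ≤ 3 := by
        rcases h.2 with h' | h'
        · exact h'
        · rwa [SimpleGraph.dist_comm]
      have := hG.dist_triangle (u := (a : V)) (v := (c : V)) (w := (b : V))
      simp only [SimpleGraph.Walk.length_cons]
      omega
  by_cases htop : G.ediam = ⊤
  · -- show B.diam = 0
    by_contra hcon
    push_neg at hcon
    have hBd : B.diam ≠ 0 := by omega
    have hBtop : B.ediam ≠ ⊤ := SimpleGraph.ediam_ne_top_of_diam_ne_zero hBd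
    have hfin : G.ediam ≤ ((3 * B.diam + 2 : ℕ) : ℕ∞) := by
      apply SimpleGraph.ediam_le_of_edist_le
      intro x y
      have hbound : G.dist x y ≤ 3 * B.diam + 2 := by
        obtain ⟨dx, hdx⟩ : ∃ dx : D, G.dist x (dx : V) ≤ 1 := by
          rcases hdom x with h | ⟨d, hd, ha⟩
          · exact ⟨⟨x, h⟩, by simp [SimpleGraph.dist_self]⟩
          · exact ⟨⟨d, hd⟩, le_of_eq (SimpleGraph.dist_eq_one_iff_adj.mpr ha.symm)⟩
        obtain ⟨dy, hdy⟩ : ∃ dy : D, G.dist (dy : V) y ≤ 1 := by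
          rcases hdom y with h | ⟨d, hd, ha⟩
          · exact ⟨⟨y, h⟩, by simp [SimpleGraph.dist_self]⟩
          · exact ⟨⟨d, hd⟩, le_of_eq (SimpleGraph.dist_eq_one_iff_adj.mpr ha)⟩
        have hreach : B.Reachable dx dy :=
          ⟨(key (G.dist (dx : V) (dy : V)) dx dy le_rfl).choose⟩
        obtain ⟨q, hq⟩ := hreach.exists_walk_length_eq_dist
        have h1 : G.dist (dx : V) (dy : V) ≤ 3 * B.dist dx dy := hq ▸ rev dx dy q
        have h2 : B.dist dx dy ≤ B.diam := SimpleGraph.dist_le_diam hBtop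
        have t1 := hG.dist_triangle (u := x) (v := (dx : V)) (w := y)
        have t2 := hG.dist_triangle (u := (dx : V)) (v := (dy : V)) (w := y)
        omega
      obtain ⟨p, hp⟩ := (hG x y).exists_walk_length_eq_dist
      calc G.edist x y ≤ p.length := G.edist_le p
        _ ≤ ((3 * B.diam + 2 : ℕ) : ℕ∞) := by
            rw [hp]; exact_mod_cast hbound
    rw [htop] at hfin
    exact absurd (top_le_iff.mp hfin) (ENat.coe_ne_top _)
  · -- G.ediam finite
    have hle : B.ediam ≤ (G.diam : ℕ∞) := by
      apply SimpleGraph.ediam_le_of_edist_le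
      intro u v
      obtain ⟨p, hp⟩ := key (G.dist (u : V) (v : V)) u v le_rfl
      calc B.edist u v ≤ p.length := B.edist_le p
        _ ≤ (G.dist (u : V) (v : V) : ℕ∞) := by exact_mod_cast hp
        _ ≤ (G.diam : ℕ∞) := by exact_mod_cast SimpleGraph.dist_le_diam htop
    calc B.diam = B.ediam.toNat := rfl
      _ ≤ ((G.diam : ℕ∞)).toNat := ENat.toNat_le_toNat hle (by simp)
      _ = G.diam := by simp
end
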